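/- arXiv:1009.4061 — 5 statements merged into one kernel-verified Lean document; each statement's English description precedes it below -/
import Mathlib

section
/- A Kolakoski sequence over the alphabet {1,2} (a sequence equal to its own run-length sequence) is not eventually periodic. -/
/-!
The run boundaries of `z` are exactly the positions where `z` changes letter. So if `z` has
eventual period `q`, the set of run boundaries is eventually invariant under `+ q`, and shifting
by `q` moves every late boundary a fixed number `P ≥ 1` of runs ahead. Hence the run-length
sequence, which is `z` itself, has eventual period `P`. Those `P` runs cover `q` positions, and
as `z` is not eventually constant one of them has length at least `2`, so `P < q`: infinite descent.
-/

namespace Kola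

/-- Run-length encoding of a finite word as (letter, count) pairs. -/
def rle : List ℕ → List (ℕ × ℕ)
  | [] => []
  | a :: l =>
    match rle l with
    | [] => [(a, 1)]
    | (b, n) :: t => if a = b then (b, n + 1) :: t else (a, 1) :: (b, n) :: t

/-- Boundary adjustment for the first run: discard if length ≤ r, extend to s if length in (r,s]. -/
def fixRun (r s : ℕ) : List (ℕ × ℕ) → List (ℕ × ℕ)
  | [] => []
  | (a, n) :: t => if n ≤ r then t else if n ≤ s then (a, s) :: t else (a, n) :: t

/-- The Kolakoski derivative over the alphabet {r,s}. -/
def D (r s : ℕ) (w : List ℕ) : List ℕ :=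
  match rle w with
  | [] => []
  | [(_, n)] => if n < s then [] else [n]
  | ps => ((fixRun r s ((fixRun r s ps).reverse)).reverse).map Prod.snd

/-- A C∞-word over {r,s}: all iterated derivatives are words over {r,s}. -/
def IsCInf (r s : ℕ) (w : List ℕ) : Prop :=
  ∀ k : ℕ, ∀ a ∈ (D r s)^[k] w, a = r ∨ a = s

/-- `t` enumerates the starting indices of the (maximal) runs of the sequence `z`. -/
def IsRunPartition (z : ℕ → ℕ) (t : ℕ → ℕ) : Prop :=
  t 0 = 0 ∧ StrictMono t ∧
  (∀ k i, t k ≤ i → i < t (k + 1) → z i = z (t k)) ∧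
  (∀ k, z (t (k + 1)) ≠ z (t k))

/-- `w` is the run-length sequence of `z`. -/
def IsRunLengthSeq (z w : ℕ → ℕ) : Prop :=
  ∃ t, IsRunPartition z t ∧ ∀ k, w k = t (k + 1) - t k

/-- A Kolakoski sequence over {r,s}: a sequence over {r,s} equal to its own run-length sequence. -/
def IsKolakoski (r s : ℕ) (z : ℕ → ℕ) : Prop :=
  (∀ n, z n = r ∨ z n = s) ∧ IsRunLengthSeq z z

def EventuallyPeriodic (z : ℕ → ℕ) : Prop :=
  ∃ m q : ℕ, 1 ≤ q ∧ ∀ i, m ≤ i → z (i + q) = z i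

/-- `w` occurs as a factor of the infinite sequence `z`. -/
def FactorOf (w : List ℕ) (z : ℕ → ℕ) : Prop :=
  ∃ i, w = (List.range w.length).map fun k => z (i + k)

/-- Letter-exchange on words over {r,s}. -/
def exch (r s : ℕ) (w : List ℕ) : List ℕ := w.map fun a => if a = r then s else r

/-- Number of occurrences of `w` as a factor of the prefix of length `n` of `z`. -/
def countOcc (z : ℕ → ℕ) (w : List ℕ) (n : ℕ) : ℕ :=
  ((Finset.range n).filter fun i => i + w.length ≤ n ∧ ∀ k < w.length, z (i + k) = w.getD k 0).card

/-- All words of length n over {r,s}. -/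
def allWords (r s : ℕ) : ℕ → Finset (List ℕ)
  | 0 => {[]}
  | n + 1 => (allWords r s n).image (List.cons r) ∪ (allWords r s n).image (List.cons s)

end Kola

theorem StrictMono.range_comp_add {t : ℕ → ℕ} (ht : StrictMono t) (a : ℕ) :
    Set.range (fun k => t (a + k)) = Set.range t ∩ Set.Ici (t a) := by
  ext x
  constructor
  · rintro ⟨k, rfl⟩
    exact ⟨⟨a + k, rfl⟩, ht.monotone (Nat.le_add_right a k)⟩
  · rintro ⟨⟨j, rfl⟩, hj⟩
    exact ⟨j - a, congrArg t (Nat.add_sub_cancel' (ht.le_iff_le.mp hj))⟩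

theorem StrictMono.exists_apply_add_eq_add {t : ℕ → ℕ} (ht : StrictMono t) {N q : ℕ} (hq : 0 < q)
    (h : ∀ i ≥ N, i + q ∈ Set.range t ↔ i ∈ Set.range t) :
    ∃ P, 0 < P ∧ ∀ k ≥ N, t (k + P) = t k + q := by
  have hN : N ≤ t N := ht.le_apply
  obtain ⟨K, hK⟩ : t N + q ∈ Set.range t := (h _ hN).mpr ⟨N, rfl⟩
  have hNK : N < K := ht.lt_iff_lt.mp (by omega)
  have hmono (a : ℕ) : StrictMono fun k => t (a + k) := fun _ _ hij => ht (by omega)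
  -- Both sides enumerate the points of `range t` from `t K = t N + q` on, in increasing order.
  have hshift : (fun k => t (K + k)) = fun k => t (N + k) + q := by
    refine ((hmono K).range_inj ((hmono N).add_const q)).mp ?_
    rw [show (fun k => t (N + k) + q) = (· + q) ∘ fun k => t (N + k) from rfl, Set.range_comp,
      ht.range_comp_add, ht.range_comp_add, hK]
    ext x
    constructor
    · rintro ⟨hx, hxK : t N + q ≤ x⟩
      refine ⟨x - q, ⟨?_, ?_⟩, Nat.sub_add_cancel (by omega)⟩
      · exact (h _ (by omega)).mp (by rwa [Nat.sub_add_cancel (by omega)])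
      · simp only [Set.mem_Ici]; omega
    · rintro ⟨y, ⟨hy, hyN⟩, rfl⟩
      exact ⟨(h y (hN.trans hyN)).mpr hy, Nat.add_le_add_right hyN q⟩
  refine ⟨K - N, by omega, fun k hk => ?_⟩
  calc t (k + (K - N)) = t (K + (k - N)) := by congr 1; omega
    _ = t (N + (k - N)) + q := congrFun hshift (k - N)
    _ = t k + q := by rw [Nat.add_sub_cancel' hk]

namespace Kola

namespace IsRunPartition

variable {z t : ℕ → ℕ} (h : IsRunPartition z t)
include h

theorem exists_apply_le_lt (i : ℕ) : ∃ k, t k ≤ i ∧ i < t (k + 1) := by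
  obtain ⟨ht0, ht, -⟩ := h
  have hex : ∃ k, i < t k := ⟨i + 1, ht.le_apply⟩
  obtain ⟨k, hk⟩ : ∃ k, Nat.find hex = k + 1 :=
    Nat.exists_eq_succ_of_ne_zero fun h0 => by
      have := Nat.find_spec hex
      rw [h0, ht0] at this
      omega
  exact ⟨k, not_lt.mp (Nat.find_min hex (by omega)), hk ▸ Nat.find_spec hex⟩

theorem mem_range_iff {i : ℕ} (hi : 0 < i) : i ∈ Set.range t ↔ z i ≠ z (i - 1) := by
  obtain ⟨ht0, ht, hrun, hchange⟩ := h
  constructor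
  · rintro ⟨_ | k, rfl⟩
    · omega
    · have : t k < t (k + 1) := ht (by omega : k < k + 1)
      rw [hrun k (t (k + 1) - 1) (by omega) (by omega)]
      exact hchange k
  · intro hne
    obtain ⟨k, hk, hk'⟩ := exists_apply_le_lt ⟨ht0, ht, hrun, hchange⟩ i
    refine ⟨k, le_antisymm hk (not_lt.mp fun hlt => hne ?_)⟩
    rw [hrun k i hk hk', hrun k (i - 1) (by omega) (by omega)]

theorem exists_ge_ne (M c : ℕ) : ∃ i ≥ M, z i ≠ c := by
  obtain ⟨-, ht, -, hchange⟩ := h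
  by_contra! hc
  exact hchange M (by rw [hc _ ((ht.le_apply).trans (ht.monotone M.le_succ)), hc _ ht.le_apply])

theorem exists_apply_add_eq_add {m q : ℕ} (hq : 0 < q) (hz : ∀ i ≥ m, z (i + q) = z i) :
    ∃ P, 0 < P ∧ ∃ N, ∀ k ≥ N, t (k + P) = t k + q := by
  obtain ⟨P, hP, hshift⟩ := h.2.1.exists_apply_add_eq_add (N := m + 1) hq fun i hi => by
    rw [h.mem_range_iff (by omega), h.mem_range_iff (by omega), hz i (by omega),
      show i + q - 1 = i - 1 + q by omega, hz (i - 1) (by omega)]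
  exact ⟨P, hP, m + 1, hshift⟩

end IsRunPartition

theorem exists_lt_period_of_isRunLengthSeq_self {z : ℕ → ℕ} (hz : IsRunLengthSeq z z) {m q : ℕ}
    (hq : 0 < q) (hper : ∀ i ≥ m, z (i + q) = z i) :
    ∃ p < q, 0 < p ∧ ∃ n, ∀ i ≥ n, z (i + p) = z i := by
  obtain ⟨t, ht, hlen⟩ := hz
  obtain ⟨P, hP, N, hshift⟩ := ht.exists_apply_add_eq_add hq hper
  refine ⟨P, ?_, hP, N, fun i hi => ?_⟩
  · -- The runs `k, …, k + P - 1` cover `q` positions, and the run `k` has length `z k ≥ 2`.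
    obtain ⟨k, hkN, hk1⟩ := ht.exists_ge_ne N 1
    have hgap := ht.2.1.add_le_nat (P - 1) (k + 1)
    rw [show P - 1 + (k + 1) = k + P by omega, hshift k hkN] at hgap
    have := ht.2.1 (by omega : k < k + 1)
    have := hlen k
    omega
  · rw [hlen, hlen, add_right_comm, hshift _ (by omega), hshift i hi]
    omega

theorem not_eventuallyPeriodic_of_isRunLengthSeq_self {z : ℕ → ℕ} (hz : IsRunLengthSeq z z) :
    ¬ EventuallyPeriodic z := by
  rintro ⟨m, q, hq, hper⟩
  induction q using Nat.strong_induction_on generalizing m with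
  | _ q ih =>
    obtain ⟨p, hpq, hp, n, hn⟩ := exists_lt_period_of_isRunLengthSeq_self hz hq hper
    exact ih p hpq n hp hn

/-- A Kolakoski sequence over {1,2} is not eventually periodic. -/
theorem kolakoski_not_eventually_periodic (z : ℕ → ℕ) (hz : IsKolakoski 1 2 z) :
    ¬ EventuallyPeriodic z :=
  not_eventuallyPeriodic_of_isRunLengthSeq_self hz.2

end Kola
end

section
/- There exist exactly two one-sided infinite sequences over {1,2} that are equal to their own run-length sequences, namely z = 2211212212211... and z' = 1·z (z prefixed by 1). -/
namespace Kola

/-- `kp k` is the word made of the first `k` runs of the Kolakoski sequence starting with 2. -/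
def kp : ℕ → List ℕ
  | 0 => []
  | k+1 => kp k ++ List.replicate ((kp k).getD k 2) (if k % 2 = 0 then 2 else 1)

def kz (n : ℕ) : ℕ := (kp (n+1)).getD n 2

def kt (k : ℕ) : ℕ := (kp k).length

lemma mem_kp {a : ℕ} : ∀ {k}, a ∈ kp k → a = 1 ∨ a = 2
  | 0, h => by simp [kp] at h
  | k+1, h => by
    rw [kp, List.mem_append] at h
    rcases h with h | h
    · exact mem_kp h
    · rcases List.eq_of_mem_replicate h with rfl
      split <;> simp

lemma getD_kp_mem (k i : ℕ) : (kp k).getD i 2 = 1 ∨ (kp k).getD i 2 = 2 := by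
  by_cases h : i < (kp k).length
  · rw [List.getD_eq_getElem _ _ h]
    exact mem_kp (List.getElem_mem h)
  · rw [List.getD_eq_default _ _ (le_of_not_gt h)]
    right; rfl

lemma kp_prefix {k m : ℕ} (h : k ≤ m) : kp k <+: kp m := by
  induction m with
  | zero => simp_all
  | succ m ih =>
    rcases Nat.lt_or_ge k (m+1) with h' | h'
    · exact (ih (Nat.lt_succ_iff.mp h')).trans ⟨_, rfl⟩
    · have : k = m + 1 := le_antisymm h h'
      subst this; exact List.prefix_refl _

lemma getD_stable {k m i : ℕ} (hk : i < (kp k).length) (h : k ≤ m) :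
    (kp m).getD i 2 = (kp k).getD i 2 := by
  have hp := kp_prefix h
  have hm : i < (kp m).length := lt_of_lt_of_le hk hp.length_le
  rw [List.getD_eq_getElem _ _ hk, List.getD_eq_getElem _ _ hm]
  exact (hp.getElem hk).symm

lemma kt_succ (k : ℕ) : kt (k+1) = kt k + (kp k).getD k 2 := by
  simp [kt, kp]

lemma one_le_getD (k i : ℕ) : 1 ≤ (kp k).getD i 2 := by
  rcases getD_kp_mem k i with h | h <;> omega

lemma getD_le_two (k i : ℕ) : (kp k).getD i 2 ≤ 2 := by
  rcases getD_kp_mem k i with h | h <;> omega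

lemma kt_lt (k : ℕ) : kt k < kt (k+1) := by
  have := one_le_getD k k
  rw [kt_succ]; omega

lemma kt_mono : StrictMono kt := strictMono_nat_of_lt_succ kt_lt

lemma kt_zero : kt 0 = 0 := rfl

lemma le_kt (k : ℕ) : k ≤ kt k := by
  induction k with
  | zero => simp [kt_zero]
  | succ k ih => have := kt_lt k; omega

lemma lt_kt {k : ℕ} (h : 1 ≤ k) : k < kt k := by
  induction k with
  | zero => omega
  | succ k ih =>
    rcases Nat.eq_zero_or_pos k with rfl | hk
    · simp [kt_succ, kt_zero, kp]
    · have := kt_lt k; have := ih hk; omega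

lemma kz_eq {n m : ℕ} (h : n < kt m) : kz n = (kp m).getD n 2 := by
  have h1 : n < kt (n+1) := lt_of_lt_of_le (Nat.lt_succ_self n) (le_kt (n+1))
  rcases Nat.le_total (n+1) m with hm | hm
  · exact (getD_stable h1 hm).symm
  · exact (getD_stable h hm)

lemma kz_mem (n : ℕ) : kz n = 1 ∨ kz n = 2 := getD_kp_mem (n+1) n

lemma kz_run {k i : ℕ} (h1 : kt k ≤ i) (h2 : i < kt (k+1)) :
    kz i = if k % 2 = 0 then 2 else 1 := by
  have hkp : kp (k+1) = kp k ++ List.replicate ((kp k).getD k 2) (if k % 2 = 0 then 2 else 1) := rfl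
  rw [kz_eq h2, hkp, List.getD_append_right _ _ _ _ h1]
  have hlen : i - (kp k).length < (List.replicate ((kp k).getD k 2) (if k % 2 = 0 then 2 else 1)).length := by
    have h2' : i < (kp (k+1)).length := h2
    rw [hkp, List.length_append, List.length_replicate] at h2'
    simp only [List.length_replicate]
    exact Nat.sub_lt_left_of_lt_add h1 h2'
  rw [List.getD_eq_getElem _ _ hlen, List.getElem_replicate]

lemma kz_zero : kz 0 = 2 := by
  have := kz_run (k := 0) (i := 0) (le_refl 0) (by have := kt_lt 0; omega)
  simpa using this

lemma run_len (k : ℕ) : kt (k+1) - kt k = kz k := by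
  rw [kt_succ]
  rcases Nat.eq_zero_or_pos k with rfl | hk
  · simp [kz_zero, kp]
  · rw [kz_eq (lt_kt hk)]; omega

lemma kz_kol : IsKolakoski 1 2 kz := by
  refine ⟨kz_mem, kt, ⟨kt_zero, kt_mono, ?_, ?_⟩, fun k => (run_len k).symm⟩
  · intro k i h1 h2
    rw [kz_run h1 h2, kz_run (le_refl _) (kt_lt k)]
  · intro k
    rw [kz_run (le_refl _) (kt_lt (k+1)), kz_run (le_refl _) (kt_lt k)]
    rcases Nat.even_or_odd k with h | h
    · have h1 : k % 2 = 0 := Nat.even_iff.mp h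
      have h2 : (k+1) % 2 = 1 := by omega
      simp [h1, h2]
    · have h1 : k % 2 = 1 := Nat.odd_iff.mp h
      have h2 : (k+1) % 2 = 0 := by omega
      simp [h1, h2]



lemma hkt (j : ℕ) : kt (j+1) = kt j + kz j := by
  have := run_len j; have := kt_lt j; omega

def kt' : ℕ → ℕ
  | 0 => 0
  | k+1 => kt k + 1

lemma kz'_kol : IsKolakoski 1 2 (fun n => if n = 0 then 1 else kz (n - 1)) := by
  constructor
  · intro n; rcases n with _ | m
    · left; rfl
    · show (if (m+1 : ℕ) = 0 then 1 else kz (m+1-1)) = 1 ∨ (if (m+1 : ℕ) = 0 then 1 else kz (m+1-1)) = 2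
      rw [if_neg (Nat.succ_ne_zero m), Nat.add_sub_cancel]
      exact kz_mem m
  refine ⟨kt', ⟨rfl, strictMono_nat_of_lt_succ ?_, ?_, ?_⟩, ?_⟩
  · intro k; rcases k with _ | j
    · show (0:ℕ) < kt 0 + 1; omega
    · show kt j + 1 < kt (j+1) + 1
      have := kt_lt j; omega
  · intro k i h1 h2
    rcases k with _ | j
    · have h2' : i < kt 0 + 1 := h2
      have hkt0 : kt 0 = 0 := kt_zero
      have : i = 0 := by omega
      subst this; rfl
    · have h1' : kt j + 1 ≤ i := h1
      have h2' : i < kt (j+1) + 1 := h2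
      have hi : ¬ (i = 0) := by omega
      show (if i = 0 then 1 else kz (i-1)) = (if kt j + 1 = 0 then 1 else kz (kt j + 1 - 1))
      rw [if_neg hi, if_neg (by omega : ¬ (kt j + 1 = 0)), Nat.add_sub_cancel]
      rw [kz_run (show kt j ≤ i - 1 by omega) (show i - 1 < kt (j+1) by omega),
        kz_run (le_refl (kt j)) (kt_lt j)]
  · intro k
    rcases k with _ | j
    · show (if kt 0 + 1 = 0 then 1 else kz (kt 0 + 1 - 1)) ≠ (if (0:ℕ) = 0 then 1 else kz (0-1))
      rw [if_neg (by omega), if_pos rfl, Nat.add_sub_cancel, kt_zero, kz_zero]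
      omega
    · show (if kt (j+1) + 1 = 0 then 1 else kz (kt (j+1) + 1 - 1)) ≠
        (if kt j + 1 = 0 then 1 else kz (kt j + 1 - 1))
      rw [if_neg (by omega), if_neg (by omega), Nat.add_sub_cancel, Nat.add_sub_cancel]
      rw [kz_run (le_refl _) (kt_lt (j+1)), kz_run (le_refl _) (kt_lt j)]
      rcases Nat.mod_two_eq_zero_or_one j with e | e
      · have e2 : (j+1) % 2 = 1 := by omega
        simp [e, e2]
      · have e2 : (j+1) % 2 = 0 := by omega
        simp [e, e2]
  · intro k
    rcases k with _ | j
    · show (if (0:ℕ) = 0 then 1 else kz (0-1)) = kt' 1 - kt' 0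
      rw [if_pos rfl]
      show (1:ℕ) = kt 0 + 1 - 0
      rw [kt_zero]
    · show (if (j+1:ℕ) = 0 then 1 else kz (j+1-1)) = kt (j+1) + 1 - (kt j + 1)
      rw [if_neg (by omega), Nat.add_sub_cancel]
      have := run_len j; have := kt_lt j; omega

lemma run_exists {s : ℕ → ℕ} (h0 : s 0 = 0) (hm : ∀ a b : ℕ, a < b → s a < s b) (n : ℕ) :
    ∃ k, s k ≤ n ∧ n < s (k+1) := by
  induction n with
  | zero => exact ⟨0, by omega, by have := hm 0 (0+1) (by omega); omega⟩
  | succ n ih =>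
    obtain ⟨k, h1, h2⟩ := ih
    rcases Nat.lt_or_ge (n+1) (s (k+1)) with h | h
    · exact ⟨k, by omega, h⟩
    · exact ⟨k+1, by omega, by have := hm (k+1) (k+1+1) (by omega); omega⟩

lemma eq_kz {y : ℕ → ℕ} (hy : IsKolakoski 1 2 y) (h0 : y 0 = 2) : y = kz := by
  obtain ⟨hmem, s, ⟨hs0, hsm, hconst, halt⟩, hlen⟩ := hy
  have hmono : ∀ a b : ℕ, a < b → s a < s b := fun a b h => hsm h
  have hge : ∀ k, k ≤ s k := fun k => hsm.le_apply
  have hss : ∀ k, s (k+1) = s k + y k := by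
    intro k; have := hlen k; have := hmono k (k+1) (by omega); omega
  have hletter : ∀ k, y (s k) = if k % 2 = 0 then 2 else 1 := by
    intro k
    induction k with
    | zero => simpa [hs0] using h0
    | succ k ih =>
      have h1 := halt k
      rcases hmem (s (k+1)) with h | h <;> rcases hmem (s k) with h' | h' <;>
        rw [h, h'] at h1 <;> rw [h'] at ih <;> rw [h] <;>
        (split at ih <;> rename_i hp) <;> (split <;> rename_i hq) <;> omega
  funext n
  induction n using Nat.strong_induction_on with
  | _ n ih =>
    obtain ⟨k, hk1, hk2⟩ := run_exists hs0 hmono n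
    have hkn : k ≤ n := le_trans (hge k) hk1
    have hst : ∀ j ≤ n, s j = kt j := by
      intro j hj
      induction j with
      | zero => simp [hs0, kt_zero]
      | succ j ihj =>
        rw [hss j, hkt j, ihj (by omega), ih j (by omega)]
    have hsk : s k = kt k := hst k hkn
    have hlt : n < kt (k+1) := by
      rcases Nat.lt_or_ge k n with h | h
      · rw [← hst (k+1) (by omega)]; exact hk2
      · have hkn' : k = n := le_antisymm hkn h
        subst hkn'
        have := hge k
        have := kt_lt k
        omega
    rw [hconst k n hk1 hk2, hletter k, kz_run (hsk ▸ hk1) hlt]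

lemma shift_kol {y : ℕ → ℕ} (hy : IsKolakoski 1 2 y) (h0 : y 0 = 1) :
    IsKolakoski 1 2 (fun n => y (n+1)) ∧ y 1 = 2 := by
  obtain ⟨hmem, s, ⟨hs0, hsm, hconst, halt⟩, hlen⟩ := hy
  have hmono : ∀ a b : ℕ, a < b → s a < s b := fun a b h => hsm h
  have hge : ∀ k, k ≤ s k := fun k => hsm.le_apply
  have hss : ∀ k, s (k+1) = s k + y k := by
    intro k; have := hlen k; have := hmono k (k+1) (by omega); omega
  have hs1 : s (0+1) = 1 := by rw [hss 0, hs0, h0]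
  have hy1 : y 1 = 2 := by
    have h1 := halt 0
    rw [hs1, hs0, h0] at h1
    rcases hmem 1 with h | h
    · exact absurd h h1
    · exact h
  refine ⟨⟨fun n => hmem (n+1), fun k => s (k+1) - 1, ⟨?_, ?_, ?_, ?_⟩, ?_⟩, hy1⟩
  · show s (0+1) - 1 = 0
    omega
  · apply strictMono_nat_of_lt_succ
    intro k
    show s (k+1) - 1 < s (k+1+1) - 1
    have := hmono (k+1) (k+1+1) (by omega)
    have := hge (k+1)
    omega
  · intro k i h1 h2
    have h1' : s (k+1) - 1 ≤ i := h1
    have h2' : i < s (k+1+1) - 1 := h2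
    have hk1 := hge (k+1)
    have hk2 := hge (k+1+1)
    show y (i+1) = y ((s (k+1) - 1) + 1)
    have e : s (k+1) - 1 + 1 = s (k+1) := by omega
    rw [e]
    exact hconst (k+1) (i+1) (by omega) (by omega)
  · intro k
    have hk1 := hge (k+1)
    have hk2 := hge (k+1+1)
    show y ((s (k+1+1) - 1) + 1) ≠ y ((s (k+1) - 1) + 1)
    rw [show s (k+1+1) - 1 + 1 = s (k+1+1) by omega, show s (k+1) - 1 + 1 = s (k+1) by omega]
    exact halt (k+1)
  · intro k
    have hk1 := hge (k+1)
    have := hlen (k+1)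
    have := hmono (k+1) (k+1+1) (by omega)
    show y (k+1) = (s (k+1+1) - 1) - (s (k+1) - 1)
    omega


/-- Exactly two sequences over {1,2} equal their own run-length sequence:
`z` starting with 2, and `z' = 1·z`. -/
theorem kolakoski_exactly_two :
    ∃ z : ℕ → ℕ, IsKolakoski 1 2 z ∧ z 0 = 2 ∧
      IsKolakoski 1 2 (fun n => if n = 0 then 1 else z (n - 1)) ∧
      ∀ y : ℕ → ℕ, IsKolakoski 1 2 y →
        y = z ∨ y = fun n => if n = 0 then 1 else z (n - 1) := by
  refine ⟨kz, kz_kol, kz_zero, kz'_kol, ?_⟩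
  intro y hy
  rcases hy.1 0 with h0 | h0
  · right
    obtain ⟨hw, hy1⟩ := shift_kol hy h0
    have hwz := eq_kz hw hy1
    funext n
    rcases n with _ | m
    · simpa using h0
    · have hm : y (m+1) = kz m := congrFun hwz m
      show y (m+1) = if (m+1 : ℕ) = 0 then 1 else kz (m+1-1)
      rw [if_neg (Nat.succ_ne_zero m), Nat.add_sub_cancel, hm]
  · left; exact eq_kz hy h0


end Kola
end

section
/- The Kolakoski sequence over {1,2} starting with 2 is the limit of iterating, starting from the single letter 2, the position-alternating substitution where letters at even positions are mapped by σ₀ (1↦1, 2↦11) and letters at odd positions by σ₁ (1↦2, 2↦22); equivalently, each such iterate is a prefix of the next and the fixed point equals its own run-length sequence. -/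
/-!
Every letter of the iterates is 1 or 2, and then `kolStep w` is the word whose `k`-th run has
length `w k` and letter 2 or 1 according to the parity of `k`. So the iterates form a prefix chain
of unbounded length, and their limit `z` is made of runs of lengths `z 0, z 1, …` with
alternating letters 2, 1, 2, …: it is its own run-length sequence.
-/

namespace Kola

/-- One step of the position-alternating substitution over {1,2}: the letter at
(1-based) position `p` is mapped by σ₀ (1↦1, 2↦11) if `p` is even, and by
σ₁ (1↦2, 2↦22) if `p` is odd (i.e. 0-based index `i` even ↦ σ₁, odd ↦ σ₀). -/
def kolStep (w : List ℕ) : List ℕ :=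
  ((w.zipIdx.map Prod.swap).map fun p =>
    if p.1 % 2 = 0 then (if p.2 = 2 then [2, 2] else [2])
    else (if p.2 = 2 then [1, 1] else [1])).flatten

section PrefixLimit

variable {α : Type*} {u : ℕ → List α}

theorem isPrefix_of_le (hu : ∀ n, u n <+: u (n + 1)) {m n : ℕ} (hmn : m ≤ n) : u m <+: u n := by
  induction n, hmn using Nat.le_induction with
  | base => exact List.prefix_refl _
  | succ n _ ih => exact ih.trans (hu n)

theorem exists_getD_eq_of_isPrefix (d : α) (hu : ∀ n, u n <+: u (n + 1))
    (hlen : ∀ i, ∃ n, i < (u n).length) :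
    ∃ z : ℕ → α, ∀ n i, i < (u n).length → (u n).getD i d = z i := by
  choose N hN using hlen
  refine ⟨fun i => (u (N i)).getD i d, fun n i hi => ?_⟩
  have getD_eq_of_le : ∀ {m k}, m ≤ k → i < (u m).length → (u m).getD i d = (u k).getD i d :=
    fun hmk him => by
      rw [List.getD_eq_getElem _ _ him, (isPrefix_of_le hu hmk).getElem him,
        List.getD_eq_getElem]
  exact (getD_eq_of_le (le_max_left n (N i)) hi).trans
    (getD_eq_of_le (le_max_right n (N i)) (hN i)).symm

end PrefixLimit

def runWord (x y : ℕ) : List ℕ → List ℕ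
  | [] => []
  | a :: w => List.replicate a x ++ runWord y x w

theorem mem_runWord {x y a : ℕ} : ∀ {w : List ℕ}, a ∈ runWord x y w → a = x ∨ a = y
  | [], h => by simp [runWord] at h
  | b :: w, h => by
    rcases List.mem_append.mp h with h | h
    · exact .inl (List.eq_of_mem_replicate h)
    · exact (mem_runWord h).symm

theorem length_runWord (x y : ℕ) : ∀ w : List ℕ, (runWord x y w).length = w.sum
  | [] => rfl
  | a :: w => by simp [runWord, length_runWord y x w]

theorem runWord_isPrefix_runWord : ∀ {x y : ℕ} {v w : List ℕ}, v <+: w →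
    runWord x y v <+: runWord x y w
  | _, _, [], _, _ => List.nil_prefix
  | x, y, a :: v, w, h => by
    obtain ⟨w', rfl, hw'⟩ : ∃ w', w = a :: w' ∧ v <+: w' := by
      obtain ⟨t, rfl⟩ := h
      exact ⟨v ++ t, rfl, List.prefix_append _ _⟩
    exact (List.prefix_append_right_inj _).mpr (runWord_isPrefix_runWord hw')

theorem getD_runWord : ∀ {x y : ℕ} {w : List ℕ} {k d : ℕ}, k < w.length → d < w.getD k 0 →
    (runWord x y w).getD (∑ j ∈ Finset.range k, w.getD j 0 + d) 0 = if Even k then x else y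
  | _, _, [], _, _, hk, _ => by simp at hk
  | x, y, a :: w, 0, d, _, hd => by
    simp only [List.getD_cons_zero] at hd
    rw [runWord, Nat.add_comm, Finset.range_zero, Finset.sum_empty, Nat.add_zero,
      List.getD_append _ _ _ _ (by simpa using hd), List.getD_replicate _ hd, if_pos Even.zero]
  | x, y, a :: w, k + 1, d, hk, hd => by
    rw [Finset.sum_range_succ', List.getD_cons_zero, runWord,
      List.getD_append_right _ _ _ _ (by simp; omega), List.length_replicate]
    simp only [List.getD_cons_succ] at hd ⊢
    rw [show ∑ j ∈ Finset.range k, w.getD j 0 + a + d - a = ∑ j ∈ Finset.range k, w.getD j 0 + d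
      by omega, getD_runWord (by simpa using hk) hd]
    by_cases hk : Even k <;> simp [hk, Nat.even_add_one]

theorem isRunLengthSeq_of_runs {z w : ℕ → ℕ} {x y : ℕ} (hxy : x ≠ y) (hw : ∀ k, 0 < w k)
    (hz : ∀ k d, d < w k → z (∑ j ∈ Finset.range k, w j + d) = if Even k then x else y) :
    IsRunLengthSeq z w := by
  set t : ℕ → ℕ := fun k => ∑ j ∈ Finset.range k, w j
  have t_succ (k : ℕ) : t (k + 1) = t k + w k := Finset.sum_range_succ _ _
  have z_t (k : ℕ) : z (t k) = if Even k then x else y := hz k 0 (hw k)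
  refine ⟨t, ⟨Finset.sum_range_zero _, strictMono_nat_of_lt_succ fun k => ?_, ?_, ?_⟩, ?_⟩
  · rw [t_succ]
    exact Nat.lt_add_of_pos_right (hw k)
  · intro k i hki hik
    rw [z_t, ← hz k (i - t k) (by have := t_succ k; omega), Nat.add_sub_cancel' hki]
  · intro k
    by_cases hk : Even k <;> simp [z_t, hk, Nat.even_add_one, hxy, hxy.symm]
  · intro k
    rw [t_succ, Nat.add_sub_cancel_left]

theorem limit_runWord_runs {u : ℕ → List ℕ} {z : ℕ → ℕ} {x y : ℕ}
    (hu : ∀ n, u (n + 1) = runWord x y (u n)) (hlen : ∀ n, n < (u n).length)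
    (hz : ∀ n i, i < (u n).length → (u n).getD i 0 = z i) {k d : ℕ} (hd : d < z k) :
    z (∑ j ∈ Finset.range k, z j + d) = if Even k then x else y := by
  set n := ∑ j ∈ Finset.range k, z j + d + k
  have hk : k < (u n).length := by have := hlen n; omega
  have hsum : ∑ j ∈ Finset.range k, (u n).getD j 0 = ∑ j ∈ Finset.range k, z j :=
    Finset.sum_congr rfl fun j hj => hz n j (by have := Finset.mem_range.mp hj; omega)
  rw [← hz (n + 1) _ (by have := hlen (n + 1); omega), hu, ← hsum]
  exact getD_runWord hk (by rwa [hz n k hk])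

theorem flatten_map_zipIdx_eq_runWord : ∀ (w : List ℕ) (n : ℕ), (∀ a ∈ w, a = 1 ∨ a = 2) →
    (((w.zipIdx n).map Prod.swap).map fun p =>
      if p.1 % 2 = 0 then (if p.2 = 2 then [2, 2] else [2])
      else (if p.2 = 2 then [1, 1] else [1])).flatten =
    if n % 2 = 0 then runWord 2 1 w else runWord 1 2 w
  | [], _, _ => by simp [runWord]
  | a :: w, n, h => by
    rw [List.zipIdx_cons, List.map_cons, List.map_cons, List.flatten_cons,
      flatten_map_zipIdx_eq_runWord w (n + 1) fun b hb => h b (List.mem_cons_of_mem _ hb)]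
    rcases h a List.mem_cons_self with rfl | rfl <;>
      rcases Nat.mod_two_eq_zero_or_one n with hn | hn <;> simp [runWord, hn, Nat.add_mod]

theorem kolStep_eq_runWord {w : List ℕ} (hw : ∀ a ∈ w, a = 1 ∨ a = 2) :
    kolStep w = runWord 2 1 w :=
  flatten_map_zipIdx_eq_runWord w 0 hw

def kolWord (n : ℕ) : List ℕ := kolStep^[n] [2]

theorem mem_kolWord : ∀ {n a : ℕ}, a ∈ kolWord n → a = 1 ∨ a = 2
  | 0, a, h => by simp_all [kolWord]
  | n + 1, a, h => by
    rw [kolWord, Function.iterate_succ_apply', ← kolWord, kolStep_eq_runWord fun _ => mem_kolWord]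
      at h
    exact (mem_runWord h).symm

theorem kolWord_succ (n : ℕ) : kolWord (n + 1) = runWord 2 1 (kolWord n) := by
  rw [kolWord, Function.iterate_succ_apply', ← kolWord, kolStep_eq_runWord fun _ => mem_kolWord]

theorem kolWord_isPrefix_succ (n : ℕ) : kolWord n <+: kolWord (n + 1) := by
  induction n with
  | zero => exact ⟨[2], rfl⟩
  | succ n ih => rw [kolWord_succ n, kolWord_succ (n + 1)]; exact runWord_isPrefix_runWord ih

theorem lt_length_kolWord (n : ℕ) : n < (kolWord n).length := by
  induction n with
  | zero => simp [kolWord]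
  | succ n ih =>
    obtain ⟨w, hw⟩ : kolWord 0 <+: kolWord n := isPrefix_of_le kolWord_isPrefix_succ n.zero_le
    have hw_pos : ∀ a ∈ w, 1 ≤ a := fun a ha => by
      rcases mem_kolWord (hw ▸ List.mem_append_right _ ha) with rfl | rfl <;> omega
    have := List.length_le_sum_of_one_le w hw_pos
    rw [kolWord_succ, length_runWord, ← hw]
    rw [← hw] at ih
    simp only [kolWord, Function.iterate_zero, id_eq, List.singleton_append, List.length_cons,
      List.sum_cons] at ih ⊢
    omega

/-- Iterating the alternating substitution from the seed `2` gives words,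
each a prefix of the next, converging to the Kolakoski sequence over {1,2} starting with 2. -/
theorem kolakoski_alternating_substitution :
    (∀ n : ℕ, kolStep^[n] [2] <+: kolStep^[n + 1] [2]) ∧
    ∃ z : ℕ → ℕ,
      (∀ n i : ℕ, i < (kolStep^[n] [2]).length → (kolStep^[n] [2]).getD i 0 = z i) ∧
      IsKolakoski 1 2 z ∧ z 0 = 2 := by
  obtain ⟨z, hz⟩ :=
    exists_getD_eq_of_isPrefix 0 kolWord_isPrefix_succ fun i => ⟨i, lt_length_kolWord i⟩
  have z_mem (i : ℕ) : z i = 1 ∨ z i = 2 := by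
    rw [← hz i i (lt_length_kolWord i), List.getD_eq_getElem _ _ (lt_length_kolWord i)]
    exact mem_kolWord (List.getElem_mem _)
  have z_pos (k : ℕ) : 0 < z k := by rcases z_mem k with h | h <;> omega
  exact ⟨kolWord_isPrefix_succ, z, hz,
    ⟨z_mem, isRunLengthSeq_of_runs (by decide) z_pos fun _ _ hd =>
      limit_runWord_runs kolWord_succ lt_length_kolWord hz hd⟩,
    (hz 0 0 Nat.one_pos).symm⟩

end Kola
end

section
/- Let r and s both be even positive integers. The generalized Kolakoski sequence over {r,s} can be written, after grouping into two-letter blocks A = rr and B = ss, as the fixed point of the substitution A ↦ A^m B^m, B ↦ A^n B^n where m = r/2 and n = s/2; consequently the frequencies of the letters r and s both exist and equal 1/2. -/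
namespace Kola

/-- The block sequence `b` (over the letters r = "A", s = "B") is a fixed point of the
substitution A ↦ A^m B^m, B ↦ A^n B^n with m = r/2, n = s/2: there is a partition of ℕ
into consecutive blocks, the k-th of length `b k`, whose contents spell σ(b k). -/
def SubstFixedPoint (r s : ℕ) (b : ℕ → ℕ) : Prop :=
  ∃ t : ℕ → ℕ, t 0 = 0 ∧ (∀ k, t (k + 1) = t k + b k) ∧
    ∀ k j, j < b k → b (t k + j) = if 2 * j < b k then r else s

/-!
Since every letter is even and the runs start at position 0, every run boundary is even, so each
run splits into two-letter blocks; this gives `z (2k + 1) = z (2k)`. Runs alternate `r, s, r, s, …`,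
and the `2k`-th and `(2k+1)`-th runs have lengths `z (2k) = z (2k + 1)`, so they spell
`r^{z(2k)} s^{z(2k)}`; halving the positions gives the substitution. Every prefix ending at a run
of even index is therefore balanced, and such prefixes occur with gaps at most `2 max r s`,
which forces both frequencies to be `1/2`.
-/

end Kola

open Filter Topology

theorem tendsto_div_of_abs_two_mul_sub_le (c : ℕ → ℝ) (C : ℝ) (h : ∀ n, |2 * c n - n| ≤ C) :
    Tendsto (fun n => c n / n) atTop (𝓝 (1 / 2)) := by
  have hdev : Tendsto (fun n : ℕ => (2 * c n - n) / n) atTop (𝓝 0) := by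
    refine squeeze_zero_norm (fun n => ?_) (tendsto_const_div_atTop_nhds_zero_nat C)
    rw [Real.norm_eq_abs, abs_div, Nat.abs_cast]
    exact div_le_div_of_nonneg_right (h n) n.cast_nonneg
  have hlim := (hdev.const_add 1).div_const 2
  rw [add_zero] at hlim
  refine hlim.congr' ?_
  filter_upwards [eventually_ne_atTop 0] with n hn
  field_simp
  ring

namespace Nat

theorem count_add_count_not (p : ℕ → Prop) [DecidablePred p] (n : ℕ) :
    count p n + count (fun i => ¬ p i) n = n := by
  simp only [count_eq_card_filter_range]
  simpa using Finset.card_filter_add_card_filter_not (s := Finset.range n) p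

theorem abs_two_mul_count_sub_le {p : ℕ → Prop} [DecidablePred p] {m n : ℕ} (hmn : m ≤ n)
    (hm : 2 * count p m = m) : |2 * (count p n : ℝ) - n| ≤ n - m := by
  obtain ⟨l, rfl⟩ := Nat.exists_eq_add_of_le hmn
  rw [count_add, abs_le]
  have hm' : (2 * count p m : ℝ) = m := by exact_mod_cast hm
  have hl : (count (fun k => p (m + k)) l : ℝ) ≤ l := by exact_mod_cast count_le _
  have hl0 : (0 : ℝ) ≤ count (fun k => p (m + k)) l := Nat.cast_nonneg _
  constructor <;> push_cast <;> linarith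

theorem tendsto_count_div_of_balanced {p : ℕ → Prop} [DecidablePred p] (G : ℕ)
    (h : ∀ n, ∃ m ≤ n, n ≤ m + G ∧ 2 * count p m = m) :
    Tendsto (fun n => (count p n : ℝ) / n) atTop (𝓝 (1 / 2)) := by
  refine tendsto_div_of_abs_two_mul_sub_le _ G fun n => ?_
  obtain ⟨m, hmn, hnG, hm⟩ := h n
  refine (abs_two_mul_count_sub_le hmn hm).trans ?_
  rw [sub_le_iff_le_add']
  exact_mod_cast hnG

theorem two_mul_count_not {p : ℕ → Prop} [DecidablePred p] {m : ℕ} (hm : 2 * count p m = m) :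
    2 * count (fun i => ¬ p i) m = m := by
  have := count_add_count_not p m
  omega

end Nat

open Nat

namespace Kola

variable {r s : ℕ} {z t : ℕ → ℕ}

theorem IsKolakoski.exists_runs (hz : IsKolakoski r s z) :
    ∃ t, IsRunPartition z t ∧ ∀ k, t (k + 1) = t k + z k := by
  obtain ⟨-, t, ht, hlen⟩ := hz
  refine ⟨t, ht, fun k => ?_⟩
  have : t k < t (k + 1) := ht.2.1 k.lt_succ_self
  have := hlen k
  omega

namespace IsRunPartition

theorem exists_mem_Ico (ht : IsRunPartition z t) (i : ℕ) : ∃ k, t k ≤ i ∧ i < t (k + 1) := by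
  obtain ⟨k, hk, hk'⟩ := ht.2.1.exists_between_of_tendsto_atTop ht.2.1.tendsto_atTop
    (x := i + 1) (by simp [ht.1])
  exact ⟨k, Nat.le_of_lt_succ hk, hk'⟩

theorem apply_apply_two_mul (ht : IsRunPartition z t) (hz : ∀ n, z n = r ∨ z n = s) (h0 : z 0 = r)
    (k : ℕ) : z (t (2 * k)) = r ∧ z (t (2 * k + 1)) = s := by
  have to_s (j : ℕ) (hj : z (t j) = r) : z (t (j + 1)) = s :=
    (hz _).resolve_left (hj ▸ ht.2.2.2 j)
  have to_r (j : ℕ) (hj : z (t j) = s) : z (t (j + 1)) = r :=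
    (hz _).resolve_right (hj ▸ ht.2.2.2 j)
  have h0' : z (t 0) = r := by rw [ht.1, h0]
  induction k with
  | zero => exact ⟨h0', to_s 0 h0'⟩
  | succ k ih =>
    have hr : z (t (2 * (k + 1))) = r := to_r _ ih.2
    exact ⟨hr, to_s _ hr⟩

theorem apply_two_mul_add_one (ht : IsRunPartition z t) (hev : ∀ k, Even (t k)) (i : ℕ) :
    z (2 * i + 1) = z (2 * i) := by
  obtain ⟨k, hk, hk'⟩ := ht.exists_mem_Ico (2 * i)
  obtain ⟨a, ha⟩ := hev (k + 1)
  rw [ht.2.2.1 k _ hk hk', ht.2.2.1 k _ (by omega) (by omega)]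

theorem even_apply_of_even (ht : IsRunPartition z t) (hlen : ∀ k, t (k + 1) = t k + z k)
    (hev : ∀ n, Even (z n)) (k : ℕ) : Even (t k) := by
  induction k with
  | zero => exact ⟨0, by rw [ht.1]⟩
  | succ k ih => exact hlen k ▸ ih.add (hev _)

end IsRunPartition

theorem apply_two_mul_succ (hlen : ∀ k, t (k + 1) = t k + z k)
    (hpair : ∀ i, z (2 * i + 1) = z (2 * i)) (k : ℕ) :
    t (2 * (k + 1)) = t (2 * k) + 2 * z (2 * k) := by
  rw [Nat.mul_succ, hlen, hlen, hpair]
  ring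

theorem two_mul_count_apply_two_mul (ht : IsRunPartition z t) (hlen : ∀ k, t (k + 1) = t k + z k)
    (hstart : ∀ k, z (t (2 * k)) = r ∧ z (t (2 * k + 1)) = s)
    (hpair : ∀ i, z (2 * i + 1) = z (2 * i)) (hrs : r ≠ s) (k : ℕ) :
    2 * count (z · = r) (t (2 * k)) = t (2 * k) := by
  induction k with
  | zero => simp [ht.1]
  | succ k ih =>
    have h1 := hlen (2 * k)
    have h2 := hlen (2 * k + 1)
    have hr : count (fun i => z (t (2 * k) + i) = r) (z (2 * k)) = z (2 * k) :=
      count_of_forall fun i hi =>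
        (ht.2.2.1 (2 * k) _ (by omega) (by omega)).trans (hstart k).1
    have hs : count (fun i => z (t (2 * k + 1) + i) = r) (z (2 * k + 1)) = 0 :=
      count_of_forall_not fun i hi => by
        rw [ht.2.2.1 (2 * k + 1) _ (by omega) (by omega), (hstart k).2]
        exact hrs.symm
    rw [show 2 * (k + 1) = 2 * k + 1 + 1 by ring, h2, count_add, hs, h1, count_add, hr]
    have := hpair k
    omega

theorem exists_balanced_prefix (hz : ∀ n, z n = r ∨ z n = s) (ht : IsRunPartition z t)
    (hlen : ∀ k, t (k + 1) = t k + z k) (hpair : ∀ i, z (2 * i + 1) = z (2 * i))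
    (hbal : ∀ k, 2 * count (z · = r) (t (2 * k)) = t (2 * k)) (n : ℕ) :
    ∃ m ≤ n, n ≤ m + 2 * max r s ∧ 2 * count (z · = r) m = m := by
  obtain ⟨k, hk, hk'⟩ := ht.exists_mem_Ico n
  have hle : t (2 * (k / 2)) ≤ t k := ht.2.1.monotone (by omega)
  have hlt : t (k + 1) ≤ t (2 * (k / 2 + 1)) := ht.2.1.monotone (by omega)
  have hbound : z (2 * (k / 2)) ≤ max r s := by rcases hz (2 * (k / 2)) with h | h <;> omega
  refine ⟨t (2 * (k / 2)), by omega, ?_, hbal _⟩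
  rw [apply_two_mul_succ hlen hpair] at hlt
  omega

theorem substFixedPoint (ht : IsRunPartition z t) (hlen : ∀ k, t (k + 1) = t k + z k)
    (hstart : ∀ k, z (t (2 * k)) = r ∧ z (t (2 * k + 1)) = s) (hev : ∀ k, Even (t k))
    (hpair : ∀ i, z (2 * i + 1) = z (2 * i)) :
    SubstFixedPoint r s (fun k => z (2 * k)) := by
  have hpos (k : ℕ) : 2 * (t (2 * k) / 2) = t (2 * k) := Nat.two_mul_div_two_of_even (hev _)
  refine ⟨fun k => t (2 * k) / 2, by simp [ht.1], fun k => ?_, fun k j hj => ?_⟩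
  · have := apply_two_mul_succ hlen hpair k
    have := hpos k
    have := hpos (k + 1)
    dsimp only
    omega
  · dsimp only at hj ⊢
    have h1 := hlen (2 * k)
    have h2 := hlen (2 * k + 1)
    rw [hpair] at h2
    rw [Nat.mul_add, hpos]
    split_ifs with hj'
    · exact (ht.2.2.1 _ _ (by omega) (by omega)).trans (hstart k).1
    · exact (ht.2.2.1 _ _ (by omega) (by omega)).trans (hstart k).2

theorem kolakoski_even_even_general (r s : ℕ)
    (her : Even r) (hes : Even s)
    (z : ℕ → ℕ) (hz : IsKolakoski r s z) (h0 : z 0 = r) :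
    (∀ k, z (2 * k + 1) = z (2 * k)) ∧
    SubstFixedPoint r s (fun k => z (2 * k)) ∧
    Filter.Tendsto
      (fun n => (((Finset.range n).filter fun i => z i = r).card : ℝ) / n)
      Filter.atTop (nhds (1 / 2)) ∧
    Filter.Tendsto
      (fun n => (((Finset.range n).filter fun i => z i = s).card : ℝ) / n)
      Filter.atTop (nhds (1 / 2)) := by
  obtain ⟨t, ht, hlen⟩ := hz.exists_runs
  have hstart := ht.apply_apply_two_mul hz.1 h0
  have hrs : r ≠ s := by simpa [(hstart 0).1, (hstart 0).2] using (ht.2.2.2 0).symm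
  have hev : ∀ k, Even (t k) := ht.even_apply_of_even hlen fun n => (hz.1 n).elim (· ▸ her) (· ▸ hes)
  have hpair := ht.apply_two_mul_add_one hev
  have hbal := exists_balanced_prefix hz.1 ht hlen hpair
    (two_mul_count_apply_two_mul ht hlen hstart hpair hrs)
  have hs_iff (i : ℕ) : z i = s ↔ ¬ z i = r := by
    rcases hz.1 i with h | h <;> simp [h, hrs, hrs.symm]
  refine ⟨hpair, substFixedPoint ht hlen hstart hev hpair, ?_, ?_⟩
  · simpa only [count_eq_card_filter_range] using tendsto_count_div_of_balanced _ hbal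
  · simpa only [count_eq_card_filter_range, hs_iff] using tendsto_count_div_of_balanced _
      fun n => (hbal n).imp fun _ ⟨hmn, hnG, hm⟩ => ⟨hmn, hnG, two_mul_count_not hm⟩

/-- For even r, s the Kolakoski sequence over {r,s} consists of two-letter
blocks rr, ss; the block sequence is the fixed point of A ↦ A^{r/2} B^{r/2},
B ↦ A^{s/2} B^{s/2}; consequently both letter frequencies exist and equal 1/2. -/
theorem kolakoski_even_even (r s : ℕ) (hr : 0 < r) (hrs : r < s)
    (her : Even r) (hes : Even s)
    (z : ℕ → ℕ) (hz : IsKolakoski r s z) (h0 : z 0 = r) :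
    (∀ k, z (2 * k + 1) = z (2 * k)) ∧
    SubstFixedPoint r s (fun k => z (2 * k)) ∧
    Filter.Tendsto
      (fun n => (((Finset.range n).filter fun i => z i = r).card : ℝ) / n)
      Filter.atTop (nhds (1 / 2)) ∧
    Filter.Tendsto
      (fun n => (((Finset.range n).filter fun i => z i = s).card : ℝ) / n)
      Filter.atTop (nhds (1 / 2)) :=
  kolakoski_even_even_general r s her hes z hz h0

end Kola
end

section
/- Over the alphabet {r,s} with r < s, every nonempty C∞-word w has at least 2r² and at most 2s² primitives, where a primitive of w is a word v with D(v) = w. -/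
namespace Kola

/-!
Write a primitive `v` of `w` as its first letter and its run lengths `n :: w' ++ [m]`. The
derivative deletes a boundary run of length `≤ r` and shortens one of length in `(r, s]` to the
letter `s`, while a longer boundary run would survive into `D v = w` as a letter other than `r`,
`s`. So `n, m ≤ s` and `w'` is `w` stripped of at most one letter at each end, determined by
`(n, m)`: the map `v ↦ (first letter, n, m) ∈ {r, s} × [1, s] × [1, s]` is injective (a single-run
primitive is `a^s`, with image `(a, s, s)`). Conversely every `(a, n, m) ∈ {r, s} × [1, r] × [1, r]`
comes from the primitive with first letter `a` and run lengths `n :: w ++ [m]`, whose boundary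
runs are deleted.
-/

def runLengths (v : List ℕ) : List ℕ := (rle v).map Prod.snd

lemma exists_rle_cons_eq (a : ℕ) (l : List ℕ) : ∃ n t, rle (a :: l) = (a, n) :: t := by
  rw [rle]
  rcases rle l with _ | ⟨⟨b, n⟩, t⟩
  · exact ⟨1, [], rfl⟩
  · by_cases hab : a = b
    · subst hab; exact ⟨n + 1, t, if_pos rfl⟩
    · exact ⟨1, (b, n) :: t, if_neg hab⟩

lemma rle_cons_of_rle_eq {a b n : ℕ} {l : List ℕ} {t : List (ℕ × ℕ)}
    (h : rle l = (b, n) :: t) :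
    rle (a :: l) = if a = b then (b, n + 1) :: t else (a, 1) :: (b, n) :: t := by
  rw [rle, h]

lemma pos_of_mem_runLengths {v : List ℕ} {n : ℕ} (hn : n ∈ runLengths v) : 0 < n := by
  induction v generalizing n with
  | nil => simp [runLengths, rle] at hn
  | cons a l ih =>
    rcases l with _ | ⟨b, l⟩
    · simp_all [runLengths, rle]
    obtain ⟨k, t, h⟩ := exists_rle_cons_eq b l
    have hk : 0 < k := ih (by simp [runLengths, h])
    have ht : ∀ m ∈ t.map Prod.snd, 0 < m := fun m hm => ih (by simp_all [runLengths])
    rw [runLengths, rle_cons_of_rle_eq h] at hn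
    split_ifs at hn <;> simp only [List.map_cons, List.mem_cons] at hn
    · rcases hn with rfl | hn
      exacts [Nat.succ_pos k, ht _ hn]
    · rcases hn with rfl | rfl | hn
      exacts [Nat.one_pos, hk, ht _ hn]

lemma rle_replicate_append {a n : ℕ} (hn : 0 < n) {u : List ℕ} (hu : ∀ b ∈ u.head?, b ≠ a) :
    rle (List.replicate n a ++ u) = (a, n) :: rle u := by
  induction n with
  | zero => omega
  | succ n ih =>
    rcases n with _ | n
    · rcases u with _ | ⟨b, u⟩
      · rfl
      obtain ⟨k, t, h⟩ := exists_rle_cons_eq b u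
      simp [rle_cons_of_rle_eq h, h, Ne.symm (hu b rfl)]
    · rw [List.replicate_succ, List.cons_append, rle, ih (by omega)]
      simp

section Alternation

def other (r s a : ℕ) : ℕ := if a = r then s else r

def decode (r s : ℕ) : ℕ → List ℕ → List ℕ
  | _, [] => []
  | a, n :: L => List.replicate n a ++ decode r s (other r s a) L

variable {r s : ℕ}

lemma other_eq_of_ne {a b : ℕ} (ha : a = r ∨ a = s) (hb : b = r ∨ b = s) (hab : a ≠ b) :
    other r s a = b := by
  unfold other
  rcases ha with rfl | rfl <;> rcases hb with rfl | rfl <;> simp_all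

lemma mem_decode {a : ℕ} (ha : a = r ∨ a = s) (L : List ℕ) :
    ∀ b ∈ decode r s a L, b = r ∨ b = s := by
  induction L generalizing a with
  | nil => simp [decode]
  | cons n L ih =>
    intro b hb
    rcases List.mem_append.mp hb with hb | hb
    · rw [List.eq_of_mem_replicate hb]; exact ha
    · exact ih (by unfold other; split_ifs <;> simp) b hb

lemma head?_decode (a : ℕ) {n : ℕ} (hn : 0 < n) (L : List ℕ) :
    (decode r s a (n :: L)).head? = some a := by
  obtain ⟨k, rfl⟩ := Nat.exists_eq_add_of_lt hn
  simp [decode, List.replicate_succ]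

lemma headD_decode (a : ℕ) {n : ℕ} (hn : 0 < n) (L : List ℕ) :
    (decode r s a (n :: L)).headD 0 = a := by
  simp [List.headD_eq_head?_getD, head?_decode a hn]

lemma runLengths_decode (hrs : r ≠ s) {a : ℕ} (ha : a = r ∨ a = s) {L : List ℕ}
    (hL : ∀ n ∈ L, 0 < n) : runLengths (decode r s a L) = L := by
  induction L generalizing a with
  | nil => rfl
  | cons n L ih =>
    have hother : other r s a = r ∨ other r s a = s := by unfold other; split_ifs <;> simp
    have hne : other r s a ≠ a := by
      unfold other; rcases ha with rfl | rfl <;> simp [hrs, Ne.symm hrs]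
    have hhead : ∀ b ∈ (decode r s (other r s a) L).head?, b ≠ a := by
      rcases L with _ | ⟨m, L⟩
      · simp [decode]
      · rw [head?_decode _ (hL m (by simp))]
        simpa using hne
    rw [decode, runLengths, rle_replicate_append (hL n (by simp)) hhead, List.map_cons,
      ← runLengths, ih hother fun m hm => hL m (by simp [hm])]

lemma decode_headD_runLengths {v : List ℕ} (hv : ∀ a ∈ v, a = r ∨ a = s) :
    decode r s (v.headD 0) (runLengths v) = v := by
  induction v with
  | nil => rfl
  | cons a l ih =>
    rcases l with _ | ⟨b, l⟩
    · rfl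
    obtain ⟨k, t, h⟩ := exists_rle_cons_eq b l
    have ih' : decode r s b (k :: t.map Prod.snd) = b :: l := by
      simpa [runLengths, h] using ih fun c hc => hv c (List.mem_cons_of_mem a hc)
    rw [runLengths, rle_cons_of_rle_eq h]
    by_cases hab : a = b
    · subst hab
      simpa [decode, List.replicate_succ] using ih'
    · have hb : other r s a = b :=
        other_eq_of_ne (hv a (by simp)) (hv b (by simp)) hab
      simpa [decode, hab, hb] using ih'

end Alternation

section Derivative

/-- What a boundary run of length `n` contributes to the derivative. -/
def trimLen (r s n : ℕ) : List ℕ := if n ≤ r then [] else if n ≤ s then [s] else [n]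

variable {r s : ℕ}

lemma fixRun_cons (p : ℕ × ℕ) (t : List (ℕ × ℕ)) :
    fixRun r s (p :: t) = fixRun r s [p] ++ t := by
  obtain ⟨a, n⟩ := p
  simp only [fixRun]
  split_ifs <;> rfl

lemma reverse_fixRun_singleton (p : ℕ × ℕ) : (fixRun r s [p]).reverse = fixRun r s [p] := by
  obtain ⟨a, n⟩ := p
  simp only [fixRun]
  split_ifs <;> rfl

lemma map_snd_fixRun_singleton (p : ℕ × ℕ) :
    (fixRun r s [p]).map Prod.snd = trimLen r s p.2 := by
  obtain ⟨a, n⟩ := p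
  simp only [fixRun, trimLen]
  split_ifs <;> rfl

lemma D_eq_nil_of_runLengths_eq_nil {v : List ℕ} (h : runLengths v = []) : D r s v = [] := by
  rw [runLengths, List.map_eq_nil_iff] at h
  rw [D, h]

lemma D_eq_of_runLengths_eq_singleton {v : List ℕ} {n : ℕ} (h : runLengths v = [n]) :
    D r s v = if n < s then [] else [n] := by
  obtain ⟨⟨a, n⟩, hv, rfl⟩ := List.map_eq_singleton_iff.mp h
  rw [D, hv]

lemma D_eq_of_runLengths_eq_cons_append {v body : List ℕ} {n m : ℕ}
    (h : runLengths v = n :: (body ++ [m])) :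
    D r s v = trimLen r s n ++ body ++ trimLen r s m := by
  obtain ⟨p, rest, hv, rfl, hrest⟩ := List.map_eq_cons_iff.mp h
  obtain ⟨mid, last, rfl, rfl, hlast⟩ := List.map_eq_append_iff.mp hrest
  obtain ⟨l, rfl, rfl⟩ := List.map_eq_singleton_iff.mp hlast
  obtain ⟨q, t, hq⟩ : ∃ q t, mid ++ [l] = q :: t := List.exists_cons_of_ne_nil (by simp)
  have hD : D r s v = ((fixRun r s ((fixRun r s (p :: q :: t)).reverse)).reverse).map Prod.snd := by
    -- the match in `D` only reduces once the first two runs are explicit pairs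
    obtain ⟨a, n⟩ := p; obtain ⟨b, k⟩ := q
    rw [D, hv, hq]
  have hrev : (fixRun r s [p] ++ (mid ++ [l])).reverse = l :: (fixRun r s [p] ++ mid).reverse := by
    simp
  rw [hD, ← hq, fixRun_cons, hrev, fixRun_cons]
  simp [reverse_fixRun_singleton, map_snd_fixRun_singleton]

lemma runLengths_cases_of_D_ne_nil {v : List ℕ} (h : D r s v ≠ []) :
    (∃ n, s ≤ n ∧ runLengths v = [n] ∧ D r s v = [n]) ∨
      ∃ n body m, runLengths v = n :: (body ++ [m]) ∧
        D r s v = trimLen r s n ++ body ++ trimLen r s m := by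
  rcases hv : runLengths v with _ | ⟨n, _ | ⟨k, t⟩⟩
  · exact absurd (D_eq_nil_of_runLengths_eq_nil hv) h
  · have hD := D_eq_of_runLengths_eq_singleton (r := r) (s := s) hv
    split_ifs at hD with hn
    · exact absurd hD h
    · exact Or.inl ⟨n, not_lt.mp hn, rfl, hD⟩
  · have hsplit := (List.dropLast_concat_getLast (List.cons_ne_nil k t)).symm
    rw [hsplit] at hv ⊢
    exact Or.inr ⟨n, _, _, rfl, D_eq_of_runLengths_eq_cons_append hv⟩

lemma trimLen_ne_nil {n : ℕ} (hn : r < n) : trimLen r s n ≠ [] := by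
  unfold trimLen; split_ifs <;> first | omega | simp

lemma le_of_forall_mem_trimLen_le (hrs : r < s) {n : ℕ} (h : ∀ a ∈ trimLen r s n, a ≤ s) :
    n ≤ s := by
  by_contra hn
  exact hn (h n (by unfold trimLen; rw [if_neg (by omega), if_neg hn]; simp))

end Derivative

section Primitives

def primitives (r s : ℕ) (w : List ℕ) : Set (List ℕ) :=
  {v | (∀ a ∈ v, a = r ∨ a = s) ∧ D r s v = w}

def boundary (v : List ℕ) : ℕ × ℕ × ℕ :=
  (v.headD 0, (runLengths v).headD 0, (runLengths v).getLastD 0)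

def boundaryTriples (r s k : ℕ) : Finset (ℕ × ℕ × ℕ) :=
  {r, s} ×ˢ (Finset.Icc 1 k ×ˢ Finset.Icc 1 k)

def primitiveOf (r s : ℕ) (w : List ℕ) (x : ℕ × ℕ × ℕ) : List ℕ :=
  decode r s x.1 (x.2.1 :: (w ++ [x.2.2]))

variable {r s : ℕ}

lemma mem_boundaryTriples {k a n m : ℕ} :
    (a, n, m) ∈ boundaryTriples r s k ↔ (a = r ∨ a = s) ∧ (1 ≤ n ∧ n ≤ k) ∧ 1 ≤ m ∧ m ≤ k := by
  simp [boundaryTriples]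

lemma card_boundaryTriples (hrs : r ≠ s) (k : ℕ) :
    (boundaryTriples r s k).card = 2 * k ^ 2 := by
  simp [boundaryTriples, Finset.card_product, Finset.card_pair hrs]
  ring

lemma singleton_ne_trimLen_append (hrs : r < s) {n : ℕ} (hn : s ≤ n) (body : List ℕ) :
    [n] ≠ trimLen r s n ++ body ++ trimLen r s n := by
  intro h
  have hlen := congrArg List.length h
  have hpos := List.length_pos_of_ne_nil (trimLen_ne_nil (s := s) (show r < n by omega))
  simp only [List.length_singleton, List.length_append] at hlen
  omega

lemma runLengths_eq_of_D_eq (hrs : r < s) {v₁ v₂ : List ℕ} (hD : D r s v₁ = D r s v₂)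
    (hne : D r s v₁ ≠ []) (hhead : (runLengths v₁).headD 0 = (runLengths v₂).headD 0)
    (hlast : (runLengths v₁).getLastD 0 = (runLengths v₂).getLastD 0) :
    runLengths v₁ = runLengths v₂ := by
  rcases runLengths_cases_of_D_ne_nil hne with ⟨n₁, hn₁, h₁, hD₁⟩ | ⟨n₁, b₁, m₁, h₁, hD₁⟩ <;>
    rcases runLengths_cases_of_D_ne_nil (hD ▸ hne) with
      ⟨n₂, hn₂, h₂, hD₂⟩ | ⟨n₂, b₂, m₂, h₂, hD₂⟩ <;>
    rw [h₁, h₂] at hhead hlast ⊢ <;> rw [hD₁, hD₂] at hD <;>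
    simp only [List.headD_cons, List.getLastD_cons, List.getLastD_nil,
      List.getLastD_concat] at hhead hlast
  · rw [hhead]
  · subst hhead hlast
    exact absurd hD (singleton_ne_trimLen_append hrs hn₁ b₂)
  · subst hhead hlast
    exact absurd hD.symm (singleton_ne_trimLen_append hrs hn₂ b₁)
  · subst hhead hlast
    rw [List.append_cancel_left (List.append_cancel_right hD)]

lemma boundary_injOn (hrs : r < s) {w : List ℕ} (hw : w ≠ []) :
    Set.InjOn boundary (primitives r s w) := by
  rintro v₁ ⟨hv₁, rfl⟩ v₂ ⟨hv₂, hD⟩ h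
  simp only [boundary, Prod.mk.injEq] at h
  obtain ⟨hfirst, hhead, hlast⟩ := h
  rw [← decode_headD_runLengths hv₁, ← decode_headD_runLengths hv₂, hfirst,
    runLengths_eq_of_D_eq hrs hD.symm hw hhead hlast]

lemma boundary_mem_boundaryTriples (hrs : r < s) {v : List ℕ} (hv : ∀ a ∈ v, a = r ∨ a = s)
    (hD : D r s v ≠ []) (hDrs : ∀ a ∈ D r s v, a = r ∨ a = s) :
    boundary v ∈ boundaryTriples r s s := by
  have hle : ∀ a ∈ D r s v, a ≤ s := fun a ha => by rcases hDrs a ha with rfl | rfl <;> omega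
  obtain ⟨a, l, rfl⟩ := List.exists_cons_of_ne_nil (l := v) (by rintro rfl; exact hD rfl)
  rw [boundary, List.headD_cons, mem_boundaryTriples]
  refine ⟨hv a (by simp), ?_⟩
  rcases runLengths_cases_of_D_ne_nil hD with ⟨n, -, h, hDv⟩ | ⟨n, b, m, h, hDv⟩ <;>
    rw [h] <;> simp only [List.headD_cons, List.getLastD_cons, List.getLastD_nil,
      List.getLastD_concat]
  · have hn : n ≤ s := hle n (by simp [hDv])
    have hpos : 0 < n := pos_of_mem_runLengths (v := a :: l) (by simp [h])
    omega
  · have hn : n ≤ s := le_of_forall_mem_trimLen_le hrs fun c hc => hle c (by simp [hDv, hc])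
    have hm : m ≤ s := le_of_forall_mem_trimLen_le hrs fun c hc => hle c (by simp [hDv, hc])
    have hnpos : 0 < n := pos_of_mem_runLengths (v := a :: l) (by simp [h])
    have hmpos : 0 < m := pos_of_mem_runLengths (v := a :: l) (by simp [h])
    omega

variable {w : List ℕ} {a n m : ℕ}

lemma runLengths_primitiveOf (hrs : r < s) (hw : ∀ c ∈ w, c = r ∨ c = s)
    (hx : (a, n, m) ∈ boundaryTriples r s r) :
    runLengths (primitiveOf r s w (a, n, m)) = n :: (w ++ [m]) := by
  obtain ⟨ha, hn, hm⟩ := mem_boundaryTriples.mp hx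
  refine runLengths_decode hrs.ne ha fun k hk => ?_
  simp only [List.mem_cons, List.mem_append, List.not_mem_nil, or_false] at hk
  rcases hk with rfl | hk | rfl
  · omega
  · rcases hw k hk with rfl | rfl <;> omega
  · omega

lemma primitiveOf_mem_primitives (hrs : r < s) (hw : ∀ c ∈ w, c = r ∨ c = s)
    (hx : (a, n, m) ∈ boundaryTriples r s r) :
    primitiveOf r s w (a, n, m) ∈ primitives r s w := by
  obtain ⟨ha, hn, hm⟩ := mem_boundaryTriples.mp hx
  refine ⟨mem_decode ha _, ?_⟩
  rw [D_eq_of_runLengths_eq_cons_append (runLengths_primitiveOf hrs hw hx)]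
  simp [trimLen, hn.2, hm.2]

lemma boundary_primitiveOf (hrs : r < s) (hw : ∀ c ∈ w, c = r ∨ c = s)
    (hx : (a, n, m) ∈ boundaryTriples r s r) :
    boundary (primitiveOf r s w (a, n, m)) = (a, n, m) := by
  obtain ⟨-, hn, -⟩ := mem_boundaryTriples.mp hx
  rw [boundary, runLengths_primitiveOf hrs hw hx, primitiveOf, headD_decode (n := n) _ hn.1]
  simp only [List.headD_cons, List.getLastD_cons, List.getLastD_concat]

end Primitives

theorem primitives_count_general (r s : ℕ) (hrs : r < s)
    (w : List ℕ) (hw : w ≠ []) (hc : IsCInf r s w) :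
    2 * r ^ 2 ≤ {v : List ℕ | (∀ a ∈ v, a = r ∨ a = s) ∧ D r s v = w}.ncard ∧
    {v : List ℕ | (∀ a ∈ v, a = r ∨ a = s) ∧ D r s v = w}.ncard ≤ 2 * s ^ 2 := by
  have hwrs : ∀ a ∈ w, a = r ∨ a = s := hc 0
  change 2 * r ^ 2 ≤ (primitives r s w).ncard ∧ (primitives r s w).ncard ≤ 2 * s ^ 2
  set P := primitives r s w
  have hinj : Set.InjOn boundary P := boundary_injOn hrs hw
  have hmaps : Set.MapsTo boundary P (boundaryTriples r s s) := by
    rintro v ⟨hv, rfl⟩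
    exact boundary_mem_boundaryTriples hrs hv hw hwrs
  have hfin : P.Finite :=
    Set.Finite.of_finite_image ((boundaryTriples r s s).finite_toSet.subset hmaps.image_subset) hinj
  have hleft : Set.LeftInvOn boundary (primitiveOf r s w) (boundaryTriples r s r) :=
    fun ⟨_, _, _⟩ hx => boundary_primitiveOf hrs hwrs hx
  constructor
  · calc 2 * r ^ 2 = (boundaryTriples r s r : Set (ℕ × ℕ × ℕ)).ncard := by
          rw [Set.ncard_coe_finset, card_boundaryTriples hrs.ne]
      _ ≤ P.ncard := Set.ncard_le_ncard_of_injOn _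
          (fun ⟨_, _, _⟩ hx => primitiveOf_mem_primitives hrs hwrs hx) hleft.injOn hfin
  · calc P.ncard = (boundary '' P).ncard := hinj.ncard_image.symm
      _ ≤ (boundaryTriples r s s : Set (ℕ × ℕ × ℕ)).ncard :=
          Set.ncard_le_ncard hmaps.image_subset (Finset.finite_toSet _)
      _ = 2 * s ^ 2 := by rw [Set.ncard_coe_finset, card_boundaryTriples hrs.ne]

/-- Every nonempty C∞-word over {r,s} has at least 2r² and at most 2s²
primitives. -/
theorem primitives_count (r s : ℕ) (hr : 0 < r) (hrs : r < s)
    (w : List ℕ) (hw : w ≠ []) (hc : IsCInf r s w) :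
    2 * r ^ 2 ≤ {v : List ℕ | (∀ a ∈ v, a = r ∨ a = s) ∧ D r s v = w}.ncard ∧
    {v : List ℕ | (∀ a ∈ v, a = r ∨ a = s) ∧ D r s v = w}.ncard ≤ 2 * s ^ 2 :=
  primitives_count_general r s hrs w hw hc

end Kola
end
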